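/- Let f be a C^1 diffeomorphism of a compact Riemannian manifold M and let Γ ⊂ M be a rectifiable curve such that the lengths |f^n(Γ)| are uniformly bounded over all n ≥ 0. Then for every δ > 0, limsup_{n→∞} (1/n) log r_n(Γ, δ) = 0. -/

import Mathlib

open Set Filter Metric MeasureTheory Module
open scoped ENNReal NNReal Topology

noncomputable section
/-! ### Metric dynamics: spanning sets, span rates, `Φ_ε`, asymptotic `h`-expansivity -/

section MetricDynamics

variable {X : Type*} [MetricSpace X]

/-- `A` is an `(n,ε)`-spanning set for `Y`: every point of `Y` is `ε`-shadowed by a point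
of `A` during the first `n` iterates. -/
def IsSpanningSet (f : X → X) (Y : Set X) (n : ℕ) (ε : ℝ) (A : Set X) : Prop :=
  ∀ y ∈ Y, ∃ x ∈ A, ∀ i < n, dist (f^[i] x) (f^[i] y) < ε

/-- `r_n(Y,ε)`: the minimal cardinality of an `(n,ε)`-spanning set of `Y` (`⊤` if there is
no finite spanning set). -/
def spanNum (f : X → X) (Y : Set X) (n : ℕ) (ε : ℝ) : ℕ∞ :=
  sInf {c : ℕ∞ | ∃ A : Finset X, IsSpanningSet f Y n ε ↑A ∧ (A.card : ℕ∞) = c}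

/-- `limsup_{n→∞} (1/n) log r_n(Y,ε)`, as an extended real number. -/
def spanRate (f : X → X) (Y : Set X) (ε : ℝ) : EReal :=
  Filter.limsup (fun n : ℕ => ((Real.log ((spanNum f Y n ε).toNat) / n : ℝ) : EReal))
    Filter.atTop

/-- The set `Φ_ε(x) = ⋂_{n ≥ 1} B̄^n_ε(x)`: points whose entire forward orbit stays within
`ε` of the orbit of `x` (in the `d_n` metrics for all `n`). -/
def PhiSet (f : X → X) (ε : ℝ) (x : X) : Set X :=
  {y | ∀ i : ℕ, dist (f^[i] y) (f^[i] x) ≤ ε}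

/-- `h̃(f,Y) = lim_{ε→0} limsup_n (1/n) log r_n(Y,ε)`; since the inner quantity increases
as `ε` decreases, the limit equals the supremum over `ε > 0`. -/
def hTilde (f : X → X) (Y : Set X) : EReal :=
  ⨆ ε : {ε : ℝ // 0 < ε}, spanRate f Y ε

/-- `h*_f(ε) = sup_{x ∈ X} h̃(f, Φ_ε(x))`. -/
def hStar (f : X → X) (ε : ℝ) : EReal :=
  ⨆ x : X, hTilde f (PhiSet f ε x)

/-- `f` is asymptotically `h`-expansive if `h*_f(ε) → 0` as `ε → 0⁺`. -/
def AsympHExpansive (f : X → X) : Prop :=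
  Filter.Tendsto (fun ε : ℝ => hStar f ε) (nhdsWithin 0 (Set.Ioi 0)) (nhds 0)

/-- Topological entropy, via spanning sets. -/
def topEnt (f : X → X) : EReal :=
  ⨆ ε : {ε : ℝ // 0 < ε}, spanRate f Set.univ ε

end MetricDynamics

/-!
Parametrize `Γ` by `γ` and let `v(t)` be the sum over `i < n` of the signed variation of `f^i ∘ γ`
from a fixed parameter to `t`. For `s ≤ t` each `d(f^i γ(s), f^i γ(t))` with `i < n` is at most
`v(t) - v(s)`, so `d_n(γ(s), γ(t)) ≤ |v(t) - v(s)|`. Since `|v| ≤ n C`, cutting the range of `v`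
into intervals of length `δ` gives an `(n, δ)`-spanning set of `Γ` with `O(n)` points, hence
`log r_n(Γ, δ) = O(log n)`.
-/

section BoundedVariation

variable {α : Type*} [LinearOrder α] {E : Type*} [PseudoMetricSpace E]

theorem dist_le_variationOnFromTo_sub {f : α → E} {s : Set α}
    (hf : LocallyBoundedVariationOn f s) {a b c : α} (as : a ∈ s) (bs : b ∈ s) (cs : c ∈ s)
    (bc : b ≤ c) :
    dist (f b) (f c) ≤ variationOnFromTo f s a c - variationOnFromTo f s a b := calc
  dist (f b) (f c) ≤ variationOnFromTo f s b c := by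
    rw [variationOnFromTo.eq_of_le f s bc, dist_edist]
    exact ENNReal.toReal_mono (hf b c bs cs)
      (eVariationOn.edist_le f ⟨bs, le_rfl, bc⟩ ⟨cs, bc, le_rfl⟩)
  _ = variationOnFromTo f s a c - variationOnFromTo f s a b := by
    rw [← variationOnFromTo.add hf as bs cs, add_sub_cancel_left]

end BoundedVariation

/-- Points with the same value of `⌊(v t - l) / w⌋` have `v`-values less than `w` apart, and
there are at most `(u - l) / w + 1` such values. -/
theorem exists_finset_card_le_forall_abs_sub_lt {α : Type*} {s : Set α} {v : α → ℝ}
    {l u w : ℝ} (hlu : l ≤ u) (hw : 0 < w) (hv : ∀ t ∈ s, v t ∈ Icc l u) :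
    ∃ T : Finset α, ↑T ⊆ s ∧ (T.card : ℝ) ≤ (u - l) / w + 1 ∧
      ∀ t ∈ s, ∃ t' ∈ T, |v t - v t'| < w := by
  set k : α → ℕ := fun t => ⌊(v t - l) / w⌋₊
  have hk_nonneg : ∀ t ∈ s, 0 ≤ (v t - l) / w := fun t ht =>
    div_nonneg (sub_nonneg.2 (hv t ht).1) hw.le
  have hk_range : k '' s ⊆ ↑(Finset.range (⌊(u - l) / w⌋₊ + 1)) := by
    rintro _ ⟨t, ht, rfl⟩
    simp only [Finset.coe_range, Set.mem_Iio, Nat.lt_succ_iff]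
    exact Nat.floor_le_floor (by gcongr; exact (hv t ht).2)
  obtain ⟨U, hUs, hU⟩ := exists_subset_bijOn s k
  have hU_fin : U.Finite :=
    Set.Finite.of_finite_image (hU.image_eq ▸ (Finset.finite_toSet _).subset hk_range) hU.injOn
  refine ⟨hU_fin.toFinset, by simpa using hUs, ?_, ?_⟩
  · have hcard_nat : hU_fin.toFinset.card ≤ ⌊(u - l) / w⌋₊ + 1 := by
      rw [← Set.ncard_eq_toFinset_card U hU_fin, ← hU.injOn.ncard_image, hU.image_eq,
        ← Finset.card_range (⌊(u - l) / w⌋₊ + 1), ← Set.ncard_coe_finset]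
      exact Set.ncard_le_ncard hk_range
    calc (hU_fin.toFinset.card : ℝ) ≤ ⌊(u - l) / w⌋₊ + 1 := by exact_mod_cast hcard_nat
      _ ≤ (u - l) / w + 1 := by
        gcongr
        exact Nat.floor_le (div_nonneg (sub_nonneg.2 hlu) hw.le)
  · intro t ht
    obtain ⟨t', ht'U, hkt⟩ := hU.surjOn ⟨t, ht, rfl⟩
    refine ⟨t', by simpa using ht'U, ?_⟩
    have hfloor : ⌊(v t - l) / w⌋ = ⌊(v t' - l) / w⌋ := by
      rw [← Int.natCast_floor_eq_floor (hk_nonneg t ht),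
        ← Int.natCast_floor_eq_floor (hk_nonneg t' (hUs ht'U))]
      exact congrArg _ hkt.symm
    have := Int.abs_sub_lt_one_of_floor_eq_floor hfloor
    rwa [← sub_div, sub_sub_sub_cancel_right, abs_div, abs_of_pos hw, div_lt_one hw] at this

section IterateVariation

variable {X : Type*} [MetricSpace X] {α : Type*} [LinearOrder α]

def sumVariationOnFromToIterate (F : X → X) (γ : α → X) (s : Set α) (a : α) (n : ℕ) (t : α) :
    ℝ :=
  ∑ i ∈ Finset.range n, variationOnFromTo (F^[i] ∘ γ) s a t

variable {F : X → X} {γ : α → X} {s : Set α} {a : α}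

/-- Each summand `variationOnFromTo (F^[i] ∘ γ) s a c - variationOnFromTo (F^[i] ∘ γ) s a b`
is nonnegative for `b ≤ c` and dominates `dist (F^[i] (γ b)) (F^[i] (γ c))`. -/
theorem dist_iterate_le_abs_sub_sumVariationOnFromToIterate
    (hγ : ∀ i, LocallyBoundedVariationOn (F^[i] ∘ γ) s) (ha : a ∈ s) {b c : α} (hb : b ∈ s)
    (hc : c ∈ s) {n i : ℕ} (hi : i < n) :
    dist (F^[i] (γ b)) (F^[i] (γ c)) ≤
      |sumVariationOnFromToIterate F γ s a n c - sumVariationOnFromToIterate F γ s a n b| := by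
  wlog hbc : b ≤ c generalizing b c
  · rw [dist_comm, abs_sub_comm]
    exact this hc hb (le_of_not_ge hbc)
  have hdist : ∀ j, dist (F^[j] (γ b)) (F^[j] (γ c)) ≤
      variationOnFromTo (F^[j] ∘ γ) s a c - variationOnFromTo (F^[j] ∘ γ) s a b :=
    fun j => dist_le_variationOnFromTo_sub (hγ j) ha hb hc hbc
  calc dist (F^[i] (γ b)) (F^[i] (γ c))
      ≤ ∑ j ∈ Finset.range n,
          (variationOnFromTo (F^[j] ∘ γ) s a c - variationOnFromTo (F^[j] ∘ γ) s a b) :=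
        (hdist i).trans <| Finset.single_le_sum (fun j _ => dist_nonneg.trans (hdist j))
          (Finset.mem_range.2 hi)
    _ ≤ _ := by
      rw [Finset.sum_sub_distrib]
      exact le_abs_self _

theorem abs_sumVariationOnFromToIterate_le {D : ℝ≥0}
    (hD : ∀ i, eVariationOn (F^[i] ∘ γ) s ≤ D) (n : ℕ) (t : α) :
    |sumVariationOnFromToIterate F γ s a n t| ≤ n * D :=
  calc |sumVariationOnFromToIterate F γ s a n t|
      ≤ ∑ i ∈ Finset.range n, |variationOnFromTo (F^[i] ∘ γ) s a t| :=
        Finset.abs_sum_le_sum_abs _ _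
    _ ≤ ∑ _i ∈ Finset.range n, (D : ℝ) := Finset.sum_le_sum fun i _ =>
        (variationOnFromTo.abs_le_eVariationOn
          (ne_top_of_le_ne_top ENNReal.coe_ne_top (hD i))).trans
          (ENNReal.toReal_le_coe_of_le_coe (hD i))
    _ = n * D := by simp

/-- Parameters whose values of `sumVariationOnFromToIterate` are `δ`-close have `δ`-close
orbits up to time `n`, and these values range over an interval of length `2 n D`. -/
theorem exists_isSpanningSet_card_le_of_eVariationOn_iterate_le {D : ℝ≥0}
    (hD : ∀ i, eVariationOn (F^[i] ∘ γ) s ≤ D) {δ : ℝ} (hδ : 0 < δ) (n : ℕ) :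
    ∃ A : Finset X, IsSpanningSet F (γ '' s) n δ ↑A ∧ (A.card : ℝ) ≤ 2 * n * D / δ + 1 := by
  classical
  rcases s.eq_empty_or_nonempty with rfl | ⟨a, ha⟩
  · exact ⟨∅, by simp [IsSpanningSet], by simp; positivity⟩
  have hγ : ∀ i, LocallyBoundedVariationOn (F^[i] ∘ γ) s := fun i =>
    BoundedVariationOn.locallyBoundedVariationOn (ne_top_of_le_ne_top ENNReal.coe_ne_top (hD i))
  set v := sumVariationOnFromToIterate F γ s a n
  obtain ⟨T, hTs, hTcard, hT⟩ := exists_finset_card_le_forall_abs_sub_lt (v := v)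
    (l := -(n * D)) (u := n * D) (neg_le_self (by positivity)) hδ
    fun t _ => abs_le.1 (abs_sumVariationOnFromToIterate_le hD n t)
  refine ⟨T.image γ, ?_, ?_⟩
  · rintro _ ⟨t, ht, rfl⟩
    obtain ⟨t', ht'T, ht'⟩ := hT t ht
    refine ⟨γ t', by simpa using ⟨t', ht'T, rfl⟩, fun i hi => ?_⟩
    exact (dist_iterate_le_abs_sub_sumVariationOnFromToIterate hγ ha (hTs ht'T) ht hi).trans_lt
      ht'
  · calc ((T.image γ).card : ℝ) ≤ T.card := by exact_mod_cast Finset.card_image_le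
      _ ≤ _ := hTcard.trans_eq (by ring)

end IterateVariation

theorem tendsto_log_div_of_le_linear {u : ℕ → ℕ} {a b : ℝ} (h : ∀ n, (u n : ℝ) ≤ a * n + b) :
    Tendsto (fun n => Real.log (u n) / n) atTop (𝓝 0) := by
  set c := |a| + |b| + 1
  have hc : 0 < c := by positivity
  have hlog_le : ∀ n : ℕ, 1 ≤ n → Real.log (u n) ≤ Real.log c + Real.log n := by
    intro n hn
    have hn' : (1 : ℝ) ≤ n := by exact_mod_cast hn
    have hcn : 1 ≤ c * n := by nlinarith [abs_nonneg a, abs_nonneg b]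
    have hu : (u n : ℝ) ≤ c * n :=
      (h n).trans (by nlinarith [le_abs_self a, le_abs_self b, abs_nonneg b])
    rw [← Real.log_mul hc.ne' (by positivity)]
    rcases (u n).eq_zero_or_pos with hzero | hpos
    · simpa [hzero] using Real.log_nonneg hcn
    · exact Real.log_le_log (by exact_mod_cast hpos) hu
  have hbound : Tendsto (fun n : ℕ => Real.log c / n + Real.log n / n) atTop (𝓝 0) := by
    simpa using (tendsto_const_div_atTop_nhds_zero_nat (Real.log c)).add
      (Real.isLittleO_log_id_atTop.tendsto_div_nhds_zero.comp tendsto_natCast_atTop_atTop)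
  refine tendsto_of_tendsto_of_tendsto_of_le_of_le' tendsto_const_nhds hbound
    (Eventually.of_forall fun n => div_nonneg (Real.log_natCast_nonneg _) n.cast_nonneg) ?_
  filter_upwards [eventually_ge_atTop 1] with n hn
  rw [← add_div]
  exact div_le_div_of_nonneg_right (hlog_le n hn) n.cast_nonneg

section SpanningSets

variable {X : Type*} [MetricSpace X] {f : X → X} {Y : Set X} {n : ℕ} {ε : ℝ}

theorem spanNum_toNat_le_card {A : Finset X} (hA : IsSpanningSet f Y n ε ↑A) :
    (spanNum f Y n ε).toNat ≤ A.card :=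
  ENat.toNat_le_of_le_natCast (sInf_le ⟨A, hA, rfl⟩)

theorem spanRate_eq_zero_of_spanNum_le_linear {a b : ℝ}
    (h : ∀ n, ((spanNum f Y n ε).toNat : ℝ) ≤ a * n + b) : spanRate f Y ε = 0 :=
  (EReal.tendsto_coe.2 (tendsto_log_div_of_le_linear h)).limsup_eq

end SpanningSets

theorem spanRate_eq_zero_of_bounded_curve_lengths_general
    {E : Type*} [NormedAddCommGroup E] [InnerProductSpace ℝ E]
    {M : Type*} [MetricSpace M] [ChartedSpace E M]
    (f : Diffeomorph (modelWithCornersSelf ℝ E) (modelWithCornersSelf ℝ E) M M 1)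
    (γ : ℝ → M)
    (C : ℝ) (hC : ∀ n : ℕ, eVariationOn (f.toFun^[n] ∘ γ) (Set.Icc 0 1) ≤ ENNReal.ofReal C) :
    ∀ δ : ℝ, 0 < δ → spanRate f.toFun (γ '' Set.Icc 0 1) δ = 0 := by
  intro δ hδ
  refine spanRate_eq_zero_of_spanNum_le_linear (a := 2 * C.toNNReal / δ) (b := 1) fun n => ?_
  obtain ⟨A, hA, hcard⟩ :=
    exists_isSpanningSet_card_le_of_eVariationOn_iterate_le (D := C.toNNReal) hC hδ n
  calc ((spanNum f.toFun (γ '' Icc 0 1) n δ).toNat : ℝ) ≤ A.card := by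
        exact_mod_cast spanNum_toNat_le_card hA
    _ ≤ _ := hcard.trans_eq (by ring)

/-- If `Γ` is a rectifiable curve whose iterates `f^n(Γ)` have uniformly bounded length,
then the `(n,δ)`-spanning numbers of `Γ` grow subexponentially, for every `δ > 0`. -/
theorem spanRate_eq_zero_of_bounded_curve_lengths
    {E : Type*} [NormedAddCommGroup E] [InnerProductSpace ℝ E] [FiniteDimensional ℝ E]
    {M : Type*} [MetricSpace M] [CompactSpace M] [ChartedSpace E M]
    [IsManifold (modelWithCornersSelf ℝ E) (⊤ : ℕ∞) M]
    (f : Diffeomorph (modelWithCornersSelf ℝ E) (modelWithCornersSelf ℝ E) M M 1)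
    (γ : ℝ → M) (hγ : ContinuousOn γ (Set.Icc 0 1))
    (hrect : eVariationOn γ (Set.Icc 0 1) ≠ ⊤)
    (C : ℝ) (hC : ∀ n : ℕ, eVariationOn (f.toFun^[n] ∘ γ) (Set.Icc 0 1) ≤ ENNReal.ofReal C) :
    ∀ δ : ℝ, 0 < δ → spanRate f.toFun (γ '' Set.Icc 0 1) δ = 0 :=
  spanRate_eq_zero_of_bounded_curve_lengths_general f γ C hC

end
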